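/- arXiv:2512.17120 — 3 statements merged into one kernel-verified Lean document; each statement's English description precedes it below -/
import Mathlib

section
/- Let Σ ∈ ℝ^{n×n} be symmetric positive semidefinite with eigenvalues λ_1 ≥ ⋯ ≥ λ_n ≥ 0, Σ_k its top-k eigentruncation, S_k := Σ − Σ_k, and D_k := diag(S_k). Then the corrected residual R_k := S_k − D_k satisfies ‖R_k‖₂ ≤ λ_{k+1}. -/
open Matrix

noncomputable def specNorm {n : ℕ} (M : Matrix (Fin n) (Fin n) ℝ) : ℝ :=
  ‖Matrix.toEuclideanCLM (𝕜 := ℝ) M‖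

open scoped RealInnerProductSpace in
lemma aux_opNorm_le {E : Type*} [NormedAddCommGroup E] [InnerProductSpace ℝ E]
    (T : E →L[ℝ] E) (c : ℝ) (hc : 0 ≤ c)
    (hsym : ∀ x y : E, ⟪T x, y⟫ = ⟪x, T y⟫)
    (hb : ∀ x : E, |⟪T x, x⟫| ≤ c * ‖x‖ ^ 2) : ‖T‖ ≤ c := by
  refine T.opNorm_le_bound hc fun x => ?_
  have key : ∀ u v : E, ⟪T u, v⟫ ≤ c / 2 * (‖u‖ ^ 2 + ‖v‖ ^ 2) := by
    intro u v
    have h2 : ⟪T v, u⟫ = ⟪T u, v⟫ := by rw [hsym, real_inner_comm]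
    have h1 : ⟪T (u + v), u + v⟫ - ⟪T (u - v), u - v⟫ = 4 * ⟪T u, v⟫ := by
      simp only [map_add, map_sub, inner_add_left, inner_add_right, inner_sub_left,
        inner_sub_right]
      linarith
    have h3 := (abs_le.mp (hb (u + v))).2
    have h4 := (abs_le.mp (hb (u - v))).1
    have h5 : ‖u + v‖ ^ 2 + ‖u - v‖ ^ 2 = 2 * (‖u‖ ^ 2 + ‖v‖ ^ 2) := by
      have := parallelogram_law_with_norm ℝ u v
      nlinarith [this]
    nlinarith [h1, h3, h4, h5]
  by_cases hTx : T x = 0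
  · rw [hTx, norm_zero]
    exact mul_nonneg hc (norm_nonneg x)
  · have ha : 0 < ‖T x‖ := norm_pos_iff.mpr hTx
    have hx : x ≠ 0 := by
      rintro rfl
      simp at hTx
    have hbx : 0 < ‖x‖ := norm_pos_iff.mpr hx
    set a := ‖T x‖ with hadef
    set b := ‖x‖ with hbdef
    set t := Real.sqrt (a / b) with ht
    have htpos : 0 < t := Real.sqrt_pos.mpr (by positivity)
    have ht2 : t ^ 2 = a / b := Real.sq_sqrt (by positivity)
    have hkey := key (t • x) (t⁻¹ • T x)
    have hlhs : ⟪T (t • x), t⁻¹ • T x⟫ = a ^ 2 := by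
      rw [_root_.map_smul, real_inner_smul_left, real_inner_smul_right,
        real_inner_self_eq_norm_sq]
      field_simp
      rw [hadef]
    have h1 : ‖t • x‖ ^ 2 = t ^ 2 * b ^ 2 := by
      rw [norm_smul, Real.norm_eq_abs, abs_of_pos htpos, mul_pow]
    have h2 : ‖t⁻¹ • T x‖ ^ 2 = (t ^ 2)⁻¹ * a ^ 2 := by
      rw [norm_smul, Real.norm_eq_abs, abs_of_pos (inv_pos.mpr htpos), mul_pow, inv_pow]
    rw [hlhs, h1, h2, ht2] at hkey
    have hexp : a / b * b ^ 2 = a * b := by field_simp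
    have hexp2 : (a / b)⁻¹ * a ^ 2 = b * a := by
      rw [inv_div]
      field_simp
    rw [hexp, hexp2] at hkey
    have : a ^ 2 ≤ c * a * b := by nlinarith
    nlinarith

open scoped RealInnerProductSpace in
/-- With `Sg` symmetric PSD, `Sk` its top-`k` eigentruncation,
`S_k = Sg - Sk` and `D_k = diag(S_k)`, the corrected residual `R_k = S_k - D_k`
satisfies `‖R_k‖₂ ≤ λ_{k+1}`. -/
theorem corrected_residual_le {n k : ℕ} (hk : k < n)
    (V : Matrix (Fin n) (Fin n) ℝ) (lam : Fin n → ℝ)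
    (hV : Vᵀ * V = 1)
    (hdec : ∀ i j : Fin n, i ≤ j → lam j ≤ lam i)
    (hnn : ∀ i, 0 ≤ lam i)
    (Sg Sk : Matrix (Fin n) (Fin n) ℝ)
    (hSg : Sg = V * Matrix.diagonal lam * Vᵀ)
    (hSk : Sk = V * Matrix.diagonal (fun i : Fin n => if (i : ℕ) < k then lam i else 0) * Vᵀ) :
    specNorm ((Sg - Sk) - Matrix.diagonal (Matrix.diag (Sg - Sk))) ≤ lam ⟨k, hk⟩ := by
  classical
  set lamk := lam ⟨k, hk⟩ with hlamk
  have hlamk0 : 0 ≤ lamk := hnn _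
  set μ : Fin n → ℝ := fun i => if (i : ℕ) < k then 0 else lam i with hμ
  have hμ0 : ∀ i, 0 ≤ μ i := by
    intro i
    by_cases h : (i : ℕ) < k <;> simp [hμ, h, hnn i]
  have hμle : ∀ i, μ i ≤ lamk := by
    intro i
    by_cases h : (i : ℕ) < k
    · simpa [hμ, h] using hlamk0
    · have : (⟨k, hk⟩ : Fin n) ≤ i := by
        simpa [Fin.le_def] using not_lt.mp h
      simpa [hμ, h] using hdec _ _ this
  have hVVt : V * Vᵀ = 1 := mul_eq_one_comm.mp hV
  have hS : Sg - Sk = V * Matrix.diagonal μ * Vᵀ := by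
    have he : (fun i => lam i - if (i : ℕ) < k then lam i else 0) = μ := by
      funext i
      by_cases h : (i : ℕ) < k <;> simp [hμ, h]
    rw [hSg, hSk, ← Matrix.sub_mul, ← Matrix.mul_sub, Matrix.diagonal_sub, he]
  set S := Sg - Sk with hSdef
  -- quadratic form of S
  have hquadS : ∀ x : Fin n → ℝ,
      0 ≤ x ⬝ᵥ (S *ᵥ x) ∧ x ⬝ᵥ (S *ᵥ x) ≤ lamk * (x ⬝ᵥ x) := by
    intro x
    set y := Vᵀ *ᵥ x with hy
    have h1 : x ⬝ᵥ (S *ᵥ x) = ∑ j, μ j * y j ^ 2 := by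
      rw [hS, ← Matrix.mulVec_mulVec, ← Matrix.mulVec_mulVec,
        Matrix.dotProduct_mulVec, ← Matrix.mulVec_transpose, ← hy]
      simp only [dotProduct, Matrix.mulVec_diagonal]
      exact Finset.sum_congr rfl fun j _ => by ring
    have hyy : y ⬝ᵥ y = x ⬝ᵥ x := by
      rw [hy, Matrix.dotProduct_mulVec (Vᵀ *ᵥ x) Vᵀ x, Matrix.vecMul_transpose,
        Matrix.mulVec_mulVec, hVVt, Matrix.one_mulVec]
    constructor
    · rw [h1]
      exact Finset.sum_nonneg fun j _ => mul_nonneg (hμ0 j) (sq_nonneg _)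
    · rw [h1, ← hyy]
      have : y ⬝ᵥ y = ∑ j, y j ^ 2 := by
        simp [dotProduct, sq]
      rw [this, Finset.mul_sum]
      exact Finset.sum_le_sum fun j _ =>
        mul_le_mul_of_nonneg_right (hμle j) (sq_nonneg _)
  -- diagonal entries of S
  have hdiag : ∀ i, 0 ≤ S i i ∧ S i i ≤ lamk := by
    intro i
    have h1 : S i i = ∑ j, μ j * V i j ^ 2 := by
      rw [hS, Matrix.mul_apply]
      simp only [Matrix.mul_diagonal, Matrix.transpose_apply]
      exact Finset.sum_congr rfl fun j _ => by ring
    have h2 : ∑ j, V i j ^ 2 = 1 := by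
      have : (V * Vᵀ) i i = (1 : Matrix (Fin n) (Fin n) ℝ) i i := by rw [hVVt]
      simpa [Matrix.mul_apply, Matrix.one_apply, sq] using this
    constructor
    · rw [h1]
      exact Finset.sum_nonneg fun j _ => mul_nonneg (hμ0 j) (sq_nonneg _)
    · rw [h1]
      calc ∑ j, μ j * V i j ^ 2 ≤ ∑ j, lamk * V i j ^ 2 :=
            Finset.sum_le_sum fun j _ => mul_le_mul_of_nonneg_right (hμle j) (sq_nonneg _)
        _ = lamk := by rw [← Finset.mul_sum, h2, mul_one]
  set R := S - Matrix.diagonal (Matrix.diag S) with hR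
  -- quadratic form bound for R
  have hquadR : ∀ x : Fin n → ℝ, |x ⬝ᵥ (R *ᵥ x)| ≤ lamk * (x ⬝ᵥ x) := by
    intro x
    have hsplit : x ⬝ᵥ (R *ᵥ x) = x ⬝ᵥ (S *ᵥ x) - ∑ i, S i i * x i ^ 2 := by
      rw [hR, Matrix.sub_mulVec, dotProduct_sub]
      congr 1
      simp only [dotProduct, Matrix.mulVec_diagonal, Matrix.diag_apply]
      exact Finset.sum_congr rfl fun i _ => by ring
    have hd0 : 0 ≤ ∑ i, S i i * x i ^ 2 :=
      Finset.sum_nonneg fun i _ => mul_nonneg (hdiag i).1 (sq_nonneg _)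
    have hd1 : ∑ i, S i i * x i ^ 2 ≤ lamk * (x ⬝ᵥ x) := by
      have : x ⬝ᵥ x = ∑ i, x i ^ 2 := by simp [dotProduct, sq]
      rw [this, Finset.mul_sum]
      exact Finset.sum_le_sum fun i _ =>
        mul_le_mul_of_nonneg_right (hdiag i).2 (sq_nonneg _)
    have hq := hquadS x
    rw [abs_le, hsplit]
    constructor <;> linarith [hq.1, hq.2]
  -- symmetry of R
  have hSsymm : Sᵀ = S := by
    rw [hS]
    simp [Matrix.transpose_mul, Matrix.diagonal_transpose, Matrix.mul_assoc]
  have hRsymm : ∀ i j, R i j = R j i := by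
    intro i j
    have h1 : S i j = S j i := by
      calc S i j = Sᵀ j i := rfl
        _ = S j i := by rw [hSsymm]
    by_cases h : i = j
    · rw [h]
    · simp [hR, Matrix.diagonal_apply_ne _ h, Matrix.diagonal_apply_ne' _ h, h1]
  -- pass to the CLM
  set T := Matrix.toEuclideanCLM (𝕜 := ℝ) R with hT
  have hTapp : ∀ x : EuclideanSpace ℝ (Fin n), ∀ i,
      T x i = (R *ᵥ (fun j => x j)) i := fun x i => rfl
  have hinner : ∀ x y : EuclideanSpace ℝ (Fin n),
      ⟪T x, y⟫ = (R *ᵥ (fun j => x j)) ⬝ᵥ (fun j => y j) := by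
    intro x y
    simp only [PiLp.inner_apply, RCLike.inner_apply, starRingEnd_apply, star_trivial]
    exact Finset.sum_congr rfl fun i _ => by rw [hTapp x i]; exact mul_comm _ _
  have hdots : ∀ u v : Fin n → ℝ, (R *ᵥ u) ⬝ᵥ v = u ⬝ᵥ (R *ᵥ v) := by
    intro u v
    simp only [dotProduct, Matrix.mulVec, dotProduct, Finset.sum_mul,
      Finset.mul_sum]
    rw [Finset.sum_comm]
    exact Finset.sum_congr rfl fun i _ => Finset.sum_congr rfl fun j _ => by
      rw [hRsymm j i]; ring
  show ‖T‖ ≤ lamk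
  refine aux_opNorm_le T lamk hlamk0 ?_ ?_
  · intro x y
    rw [hinner, real_inner_comm, hinner, hdots]
    exact dotProduct_comm _ _
  · intro x
    have h1 : ⟪T x, x⟫ = (fun j => x j) ⬝ᵥ (R *ᵥ (fun j => x j)) := by
      rw [hinner, hdots]
    have h2 : ‖x‖ ^ 2 = (fun j => x j) ⬝ᵥ (fun j => x j) := by
      rw [← real_inner_self_eq_norm_sq]
      simp only [PiLp.inner_apply, RCLike.inner_apply, starRingEnd_apply, star_trivial, dotProduct]
    rw [h1, h2]
    exact hquadR _
end

section
/- Let Σ ∈ ℝ^{n×n} be symmetric positive semidefinite with eigenvalues λ_1 ≥ ⋯ ≥ λ_n ≥ 0, Σ_k its top-k eigentruncation, S_k := Σ − Σ_k, and R_k := S_k − diag(S_k). If λ_{k+1} > 0, then the inequality is strict: ‖R_k‖₂ < λ_{k+1}. -/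
open Matrix

lemma psd_row_zero {n : ℕ} {A : Matrix (Fin n) (Fin n) ℝ} (hA : A.PosSemidef)
    {i : Fin n} (hii : A i i = 0) (j : Fin n) : A i j = 0 := by
  by_contra hij
  have hsym : A j i = A i j := by
    have h1 := hA.1; conv_lhs => rw [← h1]
    simp [conjTranspose_apply]
  set t : ℝ := -(A j j + 1) / (2 * A i j) with ht
  set x : Fin n → ℝ := t • (Pi.single i 1 : Fin n → ℝ) + Pi.single j 1 with hxdef
  have hAx : A *ᵥ x = fun l => t * A l i + A l j := by
    funext l
    simp [hxdef, mulVec_add, mulVec_smul, mulVec_single, mul_comm]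
  have hx : x ⬝ᵥ (A *ᵥ x) = t * (t * A i i + A i j) + (t * A j i + A j j) := by
    rw [hAx, hxdef]
    simp [add_dotProduct, smul_dotProduct, single_dotProduct]
  have h := hA.dotProduct_mulVec_nonneg x
  rw [star_trivial, hx, hii, hsym] at h
  have h2 : 2 * t * A i j = -(A j j + 1) := by
    rw [ht]; field_simp
  nlinarith [h2, h]

lemma quad_strict {n : ℕ} {M : Matrix (Fin n) (Fin n) ℝ} {lam : ℝ}
    (hM : M.PosSemidef) (hU : (lam • (1 : Matrix (Fin n) (Fin n) ℝ) - M).PosSemidef)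
    (hlam : 0 < lam) {x : Fin n → ℝ} (hx : x ≠ 0) :
    |x ⬝ᵥ ((M - diagonal (diag M)) *ᵥ x)| < lam * (x ⬝ᵥ x) := by
  obtain ⟨i0, hi0⟩ := Function.ne_iff.mp hx
  have hi0' : x i0 ≠ 0 := by simpa using hi0
  have hx2 : (0:ℝ) < (x i0)^2 :=
    lt_of_le_of_ne (sq_nonneg _) (Ne.symm (pow_ne_zero 2 hi0'))
  have hxx : x ⬝ᵥ x = ∑ i, (x i)^2 := by
    simp [dotProduct, sq]
  have hB : x ⬝ᵥ (diagonal (diag M) *ᵥ x) = ∑ i, M i i * (x i)^2 := by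
    simp only [dotProduct, mulVec_diagonal, diag_apply]
    exact Finset.sum_congr rfl fun i _ => by ring
  have hq : x ⬝ᵥ ((M - diagonal (diag M)) *ᵥ x)
      = x ⬝ᵥ (M *ᵥ x) - ∑ i, M i i * (x i)^2 := by
    rw [sub_mulVec, dotProduct_sub, hB]
  have hUx : ∀ y : Fin n → ℝ, y ⬝ᵥ ((lam • (1 : Matrix (Fin n) (Fin n) ℝ) - M) *ᵥ y)
      = lam * (y ⬝ᵥ y) - y ⬝ᵥ (M *ᵥ y) := by
    intro y
    rw [sub_mulVec, dotProduct_sub, smul_mulVec, one_mulVec, dotProduct_smul]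
    simp [smul_eq_mul]
  have hMle : x ⬝ᵥ (M *ᵥ x) ≤ lam * (x ⬝ᵥ x) := by
    have := hU.dotProduct_mulVec_nonneg x; rw [star_trivial, hUx] at this; linarith
  have hM0 : 0 ≤ x ⬝ᵥ (M *ᵥ x) := by simpa using hM.dotProduct_mulVec_nonneg x
  have hdiag0 : ∀ i, 0 ≤ M i i := by
    intro i
    have := hM.dotProduct_mulVec_nonneg (Pi.single i 1)
    simpa [mulVec_single, single_dotProduct] using this
  have hdiagle : ∀ i, M i i ≤ lam := by
    intro i
    have h := hU.dotProduct_mulVec_nonneg (Pi.single i 1)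
    rw [star_trivial, hUx] at h
    have h2 : (Pi.single i 1 : Fin n → ℝ) ⬝ᵥ (Pi.single i 1 : Fin n → ℝ) = 1 := by
      simp [dotProduct_single]
    have h3 : (Pi.single i 1 : Fin n → ℝ) ⬝ᵥ (M *ᵥ (Pi.single i 1 : Fin n → ℝ)) = M i i := by
      simp [mulVec_single, single_dotProduct]
    rw [h2, h3] at h; linarith
  rw [abs_lt, hq]
  constructor
  · -- lower bound
    by_contra hcon
    push_neg at hcon
    have hBle : ∑ i, M i i * (x i)^2 ≤ lam * (x ⬝ᵥ x) := by
      rw [hxx, Finset.mul_sum]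
      exact Finset.sum_le_sum fun i _ =>
        mul_le_mul_of_nonneg_right (hdiagle i) (sq_nonneg _)
    have hA0 : x ⬝ᵥ (M *ᵥ x) = 0 := by linarith
    have hBeq : ∑ i, (lam - M i i) * (x i)^2 = 0 := by
      have he : ∑ i, (lam - M i i) * (x i)^2
          = lam * (x ⬝ᵥ x) - ∑ i, M i i * (x i)^2 := by
        rw [hxx, Finset.mul_sum, ← Finset.sum_sub_distrib]
        exact Finset.sum_congr rfl fun i _ => by ring
      rw [he]; linarith
    have hMx : M *ᵥ x = 0 := by
      rw [← hM.dotProduct_mulVec_zero_iff x, star_trivial]; exact hA0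
    have hterm : (lam - M i0 i0) * (x i0)^2 = 0 :=
      (Finset.sum_eq_zero_iff_of_nonneg (fun i _ =>
        mul_nonneg (sub_nonneg.mpr (hdiagle i)) (sq_nonneg _))).mp hBeq i0 (Finset.mem_univ _)
    have hMi0 : M i0 i0 = lam := by
      rcases mul_eq_zero.mp hterm with h | h
      · linarith
      · exact absurd h (ne_of_gt hx2)
    have hrow : ∀ j, (lam • (1 : Matrix (Fin n) (Fin n) ℝ) - M) i0 j = 0 := by
      intro j
      refine psd_row_zero hU ?_ j
      simp [Matrix.smul_apply, Matrix.one_apply, hMi0]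
    have h1 : ((lam • (1 : Matrix (Fin n) (Fin n) ℝ) - M) *ᵥ x) i0 = 0 := by
      simp [mulVec, dotProduct, hrow]
    rw [sub_mulVec, smul_mulVec, one_mulVec] at h1
    simp only [Pi.sub_apply, Pi.smul_apply, smul_eq_mul, hMx, Pi.zero_apply, sub_zero] at h1
    exact hi0' ((mul_eq_zero.mp h1).resolve_left (ne_of_gt hlam))
  · -- upper bound
    by_contra hcon
    push_neg at hcon
    have hB0 : ∑ i, M i i * (x i)^2 = 0 := by
      have hBnn : 0 ≤ ∑ i, M i i * (x i)^2 :=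
        Finset.sum_nonneg fun i _ => mul_nonneg (hdiag0 i) (sq_nonneg _)
      linarith
    have hAx : x ⬝ᵥ ((lam • (1 : Matrix (Fin n) (Fin n) ℝ) - M) *ᵥ x) = 0 := by
      rw [hUx]; linarith
    have hUxz : (lam • (1 : Matrix (Fin n) (Fin n) ℝ) - M) *ᵥ x = 0 := by
      rw [← hU.dotProduct_mulVec_zero_iff x, star_trivial]; exact hAx
    have hMx : M *ᵥ x = lam • x := by
      rw [sub_mulVec, smul_mulVec, one_mulVec, sub_eq_zero] at hUxz
      exact hUxz.symm
    have hterm : M i0 i0 * (x i0)^2 = 0 :=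
      (Finset.sum_eq_zero_iff_of_nonneg (fun i _ =>
        mul_nonneg (hdiag0 i) (sq_nonneg _))).mp hB0 i0 (Finset.mem_univ _)
    have hMi0 : M i0 i0 = 0 := by
      rcases mul_eq_zero.mp hterm with h | h
      · exact h
      · exact absurd h (ne_of_gt hx2)
    have hrow := psd_row_zero hM hMi0
    have h1 : (M *ᵥ x) i0 = 0 := by
      simp [mulVec, dotProduct, hrow]
    rw [hMx] at h1
    simp only [Pi.smul_apply, smul_eq_mul] at h1
    exact hi0' ((mul_eq_zero.mp h1).resolve_left (ne_of_gt hlam))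

lemma opnorm_lt {n : ℕ} (hn : 0 < n) {R : Matrix (Fin n) (Fin n) ℝ} {lam : ℝ}
    (hsym : Rᵀ = R) (hlam : 0 < lam)
    (hquad : ∀ x : Fin n → ℝ, x ≠ 0 → |x ⬝ᵥ (R *ᵥ x)| < lam * (x ⬝ᵥ x)) :
    ‖toEuclideanCLM (𝕜 := ℝ) R‖ < lam := by
  set T := toEuclideanCLM (𝕜 := ℝ) R with hT
  have hinner : ∀ x y : EuclideanSpace ℝ (Fin n),
      (inner ℝ x y : ℝ) = (WithLp.equiv 2 _ x) ⬝ᵥ (WithLp.equiv 2 _ y) := by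
    intro x y
    simp only [PiLp.inner_apply, RCLike.inner_apply, dotProduct,
      starRingEnd_apply, star_trivial]
    exact Finset.sum_congr rfl fun i _ => mul_comm _ _
  have hTapp : ∀ x : EuclideanSpace ℝ (Fin n),
      WithLp.equiv 2 _ (T x) = R *ᵥ (WithLp.equiv 2 _ x) := by
    intro x; rw [hT]; rfl
  have hxTx : ∀ x : EuclideanSpace ℝ (Fin n),
      (inner ℝ x (T x) : ℝ) = (WithLp.equiv 2 _ x) ⬝ᵥ (R *ᵥ (WithLp.equiv 2 _ x)) := by
    intro x; rw [hinner, hTapp]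
  -- symmetry of T w.r.t. inner product
  have hsymT : ∀ a b : EuclideanSpace ℝ (Fin n), (inner ℝ (T a) b : ℝ) = (inner ℝ a (T b) : ℝ) := by
    intro a b
    rw [hinner, hinner, hTapp, hTapp, dotProduct_mulVec, ← mulVec_transpose, hsym]
  -- max of |⟪x, Tx⟫| on the unit sphere
  have hSne : (Metric.sphere (0 : EuclideanSpace ℝ (Fin n)) 1).Nonempty := by
    refine ⟨EuclideanSpace.single ⟨0, hn⟩ (1:ℝ), ?_⟩
    simp [EuclideanSpace.norm_single]
  have hfc : Continuous fun x : EuclideanSpace ℝ (Fin n) => |(inner ℝ x (T x) : ℝ)| :=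
    continuous_abs.comp (continuous_id.inner T.continuous)
  obtain ⟨x₀, hx₀S, hmax⟩ := (isCompact_sphere (0 : EuclideanSpace ℝ (Fin n)) 1).exists_isMaxOn
    hSne hfc.continuousOn
  have hx₀ : ‖x₀‖ = 1 := mem_sphere_zero_iff_norm.mp hx₀S
  set c : ℝ := |(inner ℝ x₀ (T x₀) : ℝ)| with hcdef
  have hc0 : 0 ≤ c := abs_nonneg _
  have hclt : c < lam := by
    have hx₀ne : (WithLp.equiv 2 _ x₀ : Fin n → ℝ) ≠ 0 := by
      intro h
      have : x₀ = 0 := by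
        apply (WithLp.equiv 2 _).injective
        simpa using h
      rw [this] at hx₀; simp at hx₀
    have := hquad _ hx₀ne
    rw [hcdef, hxTx]
    have hxx : (WithLp.equiv 2 _ x₀ : Fin n → ℝ) ⬝ᵥ (WithLp.equiv 2 _ x₀) = 1 := by
      have := hinner x₀ x₀
      rw [real_inner_self_eq_norm_sq, hx₀] at this
      simpa using this.symm
    rw [hxx] at this
    linarith
  -- uniform quadratic bound
  have hb : ∀ z : EuclideanSpace ℝ (Fin n), |(inner ℝ z (T z) : ℝ)| ≤ c * ‖z‖^2 := by
    intro z
    rcases eq_or_ne z 0 with rfl | hz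
    · simp
    · have hz0 : (0:ℝ) < ‖z‖ := norm_pos_iff.mpr hz
      set u : EuclideanSpace ℝ (Fin n) := ‖z‖⁻¹ • z with hu
      have hus : ‖u‖ = 1 := by
        rw [hu, norm_smul]
        simp [abs_of_pos (inv_pos.mpr hz0), inv_mul_cancel₀ (ne_of_gt hz0)]
      have humem : u ∈ Metric.sphere (0 : EuclideanSpace ℝ (Fin n)) 1 :=
        mem_sphere_zero_iff_norm.mpr hus
      have := hmax humem
      simp only [Set.mem_setOf_eq] at this
      have hval : (inner ℝ u (T u) : ℝ) = ‖z‖⁻¹^2 * (inner ℝ z (T z) : ℝ) := by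
        rw [hu, _root_.map_smul, real_inner_smul_left, real_inner_smul_right]
        ring
      rw [hval, abs_mul, abs_of_nonneg (by positivity : (0:ℝ) ≤ ‖z‖⁻¹^2)] at this
      have h2 : |(inner ℝ z (T z) : ℝ)| = ‖z‖^2 * (‖z‖⁻¹^2 * |(inner ℝ z (T z) : ℝ)|) := by
        field_simp
      rw [h2]
      calc ‖z‖^2 * (‖z‖⁻¹^2 * |(inner ℝ z (T z) : ℝ)|) ≤ ‖z‖^2 * c := by
            apply mul_le_mul_of_nonneg_left this (by positivity)
        _ = c * ‖z‖^2 := by ring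
  -- polarization bound
  have hpol : ∀ x y : EuclideanSpace ℝ (Fin n),
      (inner ℝ (T x) y : ℝ) ≤ c / 2 * (‖x‖^2 + ‖y‖^2) := by
    intro x y
    have e1 : (inner ℝ (T (x + y)) (x + y) : ℝ)
        = (inner ℝ (T x) x : ℝ) + 2 * (inner ℝ (T x) y : ℝ) + (inner ℝ (T y) y : ℝ) := by
      rw [map_add]
      rw [inner_add_left, inner_add_right, inner_add_right]
      have : (inner ℝ (T y) x : ℝ) = (inner ℝ (T x) y : ℝ) := by
        rw [hsymT, real_inner_comm]
      rw [this]; ring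
    have e2 : (inner ℝ (T (x - y)) (x - y) : ℝ)
        = (inner ℝ (T x) x : ℝ) - 2 * (inner ℝ (T x) y : ℝ) + (inner ℝ (T y) y : ℝ) := by
      rw [map_sub]
      rw [inner_sub_left, inner_sub_right, inner_sub_right]
      have : (inner ℝ (T y) x : ℝ) = (inner ℝ (T x) y : ℝ) := by
        rw [hsymT, real_inner_comm]
      rw [this]; ring
    have b1 : (inner ℝ (T (x + y)) (x + y) : ℝ) ≤ c * ‖x + y‖^2 := by
      have := hb (x + y)
      rw [real_inner_comm] at this
      exact (le_abs_self _).trans this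
    have b2 : -(c * ‖x - y‖^2) ≤ (inner ℝ (T (x - y)) (x - y) : ℝ) := by
      have := hb (x - y)
      rw [real_inner_comm] at this
      exact neg_le_of_abs_le this |>.trans_eq rfl
    have hpar : ‖x + y‖^2 + ‖x - y‖^2 = 2 * ‖x‖^2 + 2 * ‖y‖^2 := by
      have := parallelogram_law_with_norm ℝ x y
      nlinarith [this]
    nlinarith [b1, b2, e1, e2, hpar]
  -- operator norm bound
  have hnorm : ∀ x : EuclideanSpace ℝ (Fin n), ‖T x‖ ≤ c * ‖x‖ := by
    intro x
    rcases eq_or_ne (T x) 0 with h0 | h0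
    · rw [h0]; simp; positivity
    · have hTx0 : (0:ℝ) < ‖T x‖ := norm_pos_iff.mpr h0
      set y : EuclideanSpace ℝ (Fin n) := (‖x‖ / ‖T x‖) • T x with hy
      have hyn : ‖y‖ = ‖x‖ := by
        rw [hy, norm_smul, Real.norm_eq_abs, abs_of_nonneg (by positivity), div_mul_cancel₀]
        exact ne_of_gt hTx0
      have hip : (inner ℝ (T x) y : ℝ) = ‖x‖ * ‖T x‖ := by
        rw [hy, real_inner_smul_right, real_inner_self_eq_norm_sq]
        field_simp
      have := hpol x y
      rw [hip, hyn] at this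
      rcases eq_or_ne x 0 with rfl | hx
      · simp at h0
      · have hx0 : (0:ℝ) < ‖x‖ := norm_pos_iff.mpr hx
        nlinarith [this]
  calc ‖T‖ ≤ c := T.opNorm_le_bound hc0 hnorm
    _ < lam := hclt


/-- With `Sg` symmetric PSD, `Sk` its top-`k` eigentruncation,
`S_k = Sg - Sk` and `R_k = S_k - diag(S_k)`: if `λ_{k+1} > 0` then
`‖R_k‖₂ < λ_{k+1}` (strict inequality). -/
theorem corrected_residual_lt {n k : ℕ} (hk : k < n)
    (V : Matrix (Fin n) (Fin n) ℝ) (lam : Fin n → ℝ)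
    (hV : Vᵀ * V = 1)
    (hdec : ∀ i j : Fin n, i ≤ j → lam j ≤ lam i)
    (hnn : ∀ i, 0 ≤ lam i)
    (Sg Sk : Matrix (Fin n) (Fin n) ℝ)
    (hSg : Sg = V * Matrix.diagonal lam * Vᵀ)
    (hSk : Sk = V * Matrix.diagonal (fun i : Fin n => if (i : ℕ) < k then lam i else 0) * Vᵀ)
    (hpos : 0 < lam ⟨k, hk⟩) :
    specNorm ((Sg - Sk) - Matrix.diagonal (Matrix.diag (Sg - Sk))) < lam ⟨k, hk⟩ := by
  have hn : 0 < n := lt_of_le_of_lt (Nat.zero_le k) hk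
  set lk : ℝ := lam ⟨k, hk⟩ with hlk
  have hVV : V * Vᵀ = 1 := mul_eq_one_comm.mp hV
  have hVH : Vᴴ = Vᵀ := by
    ext i j; simp [conjTranspose_apply]
  set d : Fin n → ℝ := fun i => if (i : ℕ) < k then 0 else lam i with hd
  set M : Matrix (Fin n) (Fin n) ℝ := Sg - Sk with hMdef
  have hM : M = V * diagonal d * Vᵀ := by
    have h2 : diagonal lam - diagonal (fun i : Fin n => if (i : ℕ) < k then lam i else 0)
        = diagonal d := by
      rw [diagonal_sub]
      have h3 : (fun i : Fin n => lam i - if (i : ℕ) < k then lam i else 0) = d := by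
        funext i
        by_cases h : (i : ℕ) < k <;> simp [hd, h]
      rw [h3]
    rw [hMdef, hSg, hSk, ← Matrix.sub_mul, ← Matrix.mul_sub, h2]
  have hdnn : ∀ i, 0 ≤ d i := by
    intro i; by_cases h : (i : ℕ) < k <;> simp [hd, h, hnn i]
  have hdle : ∀ i, d i ≤ lk := by
    intro i
    by_cases h : (i : ℕ) < k
    · simp [hd, h, hpos.le]
    · simp only [hd, h, if_false]
      exact hdec ⟨k, hk⟩ i (by simpa [Fin.le_def] using not_lt.mp h)
  have hMpsd : M.PosSemidef := by
    rw [hM, ← hVH]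
    exact (PosSemidef.diagonal hdnn).mul_mul_conjTranspose_same V
  have hUeq : lk • (1 : Matrix (Fin n) (Fin n) ℝ) - M
      = V * diagonal (fun i => lk - d i) * Vᵀ := by
    have h1 : diagonal (fun i => lk - d i)
        = lk • (1 : Matrix (Fin n) (Fin n) ℝ) - diagonal d := by
      ext i j
      by_cases h : i = j <;> simp [diagonal, Matrix.one_apply, h]
    rw [h1, Matrix.mul_sub, Matrix.sub_mul, ← hM]
    congr 1
    rw [mul_smul_comm, smul_mul_assoc, Matrix.mul_one, hVV]
  have hUpsd : (lk • (1 : Matrix (Fin n) (Fin n) ℝ) - M).PosSemidef := by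
    rw [hUeq, ← hVH]
    exact (PosSemidef.diagonal (fun i => sub_nonneg.mpr (hdle i))).mul_mul_conjTranspose_same V
  have hMsym : Mᵀ = M := by
    have := hMpsd.1
    rw [IsHermitian] at this
    calc Mᵀ = Mᴴ := by ext i j; simp [conjTranspose_apply]
      _ = M := this
  have hRsym : (M - diagonal (diag M))ᵀ = M - diagonal (diag M) := by
    rw [transpose_sub, diagonal_transpose, hMsym]
  have hquad : ∀ x : Fin n → ℝ, x ≠ 0 →
      |x ⬝ᵥ ((M - diagonal (diag M)) *ᵥ x)| < lk * (x ⬝ᵥ x) :=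
    fun x hx => quad_strict hMpsd hUpsd hpos hx
  exact opnorm_lt hn hRsym hpos hquad
end

section
/- Let S ∈ ℝ^{n×n} be symmetric positive semidefinite. Then the hollowed matrix S − diag(S), obtained by zeroing out the diagonal of S, satisfies ‖S − diag(S)‖₂ ≤ ‖S‖₂. -/
open Matrix

open scoped RealInnerProductSpace

/-- A self-adjoint operator whose Rayleigh quotient is bounded by `c` has norm at most `c`. -/
lemma selfAdjoint_opNorm_le {E : Type*} [NormedAddCommGroup E] [InnerProductSpace ℝ E]
    (T : E →L[ℝ] E) (hsym : ∀ x y : E, ⟪T x, y⟫ = ⟪x, T y⟫) {c : ℝ} (hc : 0 ≤ c)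
    (hb : ∀ x : E, |⟪T x, x⟫| ≤ c * ‖x‖ ^ 2) : ‖T‖ ≤ c := by
  refine T.opNorm_le_bound hc fun x => ?_
  by_cases hx : T x = 0
  · simp only [hx, norm_zero]
    positivity
  have hTx : (0 : ℝ) < ‖T x‖ := norm_pos_iff.mpr hx
  set y : E := (‖x‖ / ‖T x‖) • T x with hy
  have hyx : ⟪T y, x⟫ = ⟪T x, y⟫ := by rw [real_inner_comm, hsym]
  have key : 4 * ⟪T x, y⟫ = ⟪T (x + y), x + y⟫ - ⟪T (x - y), x - y⟫ := by
    simp only [map_add, map_sub, inner_add_left, inner_add_right, inner_sub_left,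
      inner_sub_right]
    linarith [hyx]
  have hpar : ‖x + y‖ ^ 2 + ‖x - y‖ ^ 2 = 2 * ‖x‖ ^ 2 + 2 * ‖y‖ ^ 2 := by
    rw [norm_add_sq_real, norm_sub_sq_real]; ring
  have h1 : |⟪T (x + y), x + y⟫| ≤ c * ‖x + y‖ ^ 2 := hb _
  have h2 : |⟪T (x - y), x - y⟫| ≤ c * ‖x - y‖ ^ 2 := hb _
  have hny : ‖y‖ = ‖x‖ := by
    rw [hy, norm_smul, Real.norm_eq_abs, abs_div, abs_of_nonneg (norm_nonneg x),
      abs_of_nonneg (norm_nonneg (T x)), div_mul_cancel₀]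
    exact ne_of_gt hTx
  have hinner : ⟪T x, y⟫ = ‖x‖ * ‖T x‖ := by
    rw [hy, real_inner_smul_right, real_inner_self_eq_norm_sq]
    field_simp
  have hfour : 4 * (‖x‖ * ‖T x‖) ≤ c * (4 * ‖x‖ ^ 2) := by
    have := abs_le.mp h1
    have := abs_le.mp h2
    have h3 : c * ‖x + y‖ ^ 2 + c * ‖x - y‖ ^ 2 = c * (4 * ‖x‖ ^ 2) := by
      rw [← mul_add, hpar, hny]; ring
    linarith [(abs_le.mp h1).2, (abs_le.mp h2).1, key, hinner, h3]
  rcases eq_or_lt_of_le (norm_nonneg x) with hx0 | hx0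
  · exfalso
    have : x = 0 := by simpa using hx0.symm
    exact hx (by simp [this])
  · nlinarith

/-- For a symmetric PSD matrix `S`, the hollowed matrix
`S - diag(S)` satisfies `‖S - diag(S)‖₂ ≤ ‖S‖₂`. -/
theorem hollow_specNorm_le {n : ℕ} (S : Matrix (Fin n) (Fin n) ℝ)
    (hS : S.PosSemidef) :
    specNorm (S - Matrix.diagonal (Matrix.diag S)) ≤ specNorm S := by
  classical
  set D : Matrix (Fin n) (Fin n) ℝ := Matrix.diagonal (Matrix.diag S) with hD
  set A : Matrix (Fin n) (Fin n) ℝ := S - D with hA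
  set TS := Matrix.toEuclideanCLM (𝕜 := ℝ) S with hTS
  set TA := Matrix.toEuclideanCLM (𝕜 := ℝ) A with hTA
  have hc : (0 : ℝ) ≤ ‖TS‖ := norm_nonneg _
  -- inner product formula
  have hinner_eq : ∀ (M : Matrix (Fin n) (Fin n) ℝ) (x y : EuclideanSpace ℝ (Fin n)),
      ⟪Matrix.toEuclideanCLM (𝕜 := ℝ) M x, y⟫ =
        (M *ᵥ (WithLp.equiv 2 _ x)) ⬝ᵥ (WithLp.equiv 2 _ y) := by
    intro M x y
    rw [PiLp.inner_apply]
    simp [dotProduct, mul_comm]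
  -- symmetry of A
  have hAH : Aᵀ = A := by
    have h1 : Sᵀ = S := by
      have := hS.1
      simpa [Matrix.IsHermitian, Matrix.conjTranspose_eq_transpose_of_trivial] using this
    rw [hA, Matrix.transpose_sub, h1, hD, Matrix.diagonal_transpose]
  have hsym : ∀ x y : EuclideanSpace ℝ (Fin n), ⟪TA x, y⟫ = ⟪x, TA y⟫ := by
    intro x y
    rw [hTA, hinner_eq, real_inner_comm, hinner_eq]
    rw [dotProduct_comm, Matrix.dotProduct_mulVec, ← Matrix.mulVec_transpose, hAH]
  -- diagonal entries bounded by norm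
  have hdiag_nonneg : ∀ i, 0 ≤ S i i := by
    intro i
    have := hS.dotProduct_mulVec_nonneg (Pi.single i 1)
    simpa [Matrix.mulVec_single, single_dotProduct] using this
  have hdiag_le : ∀ i, S i i ≤ ‖TS‖ := by
    intro i
    have he : ‖(EuclideanSpace.single i (1:ℝ) : EuclideanSpace ℝ (Fin n))‖ = 1 := by
      simp [EuclideanSpace.norm_single]
    have h1 : ⟪TS (EuclideanSpace.single i 1), EuclideanSpace.single i 1⟫ = S i i := by
      rw [hTS, hinner_eq]
      show (S *ᵥ Pi.single i 1) ⬝ᵥ Pi.single i 1 = S i i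
      simp [Matrix.mulVec_single, dotProduct_single]
    calc S i i = ⟪TS (EuclideanSpace.single i 1), EuclideanSpace.single i 1⟫ := h1.symm
      _ ≤ ‖TS (EuclideanSpace.single i 1)‖ * ‖(EuclideanSpace.single i (1:ℝ) :
            EuclideanSpace ℝ (Fin n))‖ := real_inner_le_norm _ _
      _ ≤ ‖TS‖ * ‖(EuclideanSpace.single i (1:ℝ) : EuclideanSpace ℝ (Fin n))‖ *
            ‖(EuclideanSpace.single i (1:ℝ) : EuclideanSpace ℝ (Fin n))‖ := by
          gcongr; exact TS.le_opNorm _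
      _ = ‖TS‖ := by rw [he]; ring
  -- Rayleigh bound for A
  have hb : ∀ x : EuclideanSpace ℝ (Fin n), |⟪TA x, x⟫| ≤ ‖TS‖ * ‖x‖ ^ 2 := by
    intro x
    set v : Fin n → ℝ := WithLp.equiv 2 _ x with hv
    have hAv : ⟪TA x, x⟫ = (S *ᵥ v) ⬝ᵥ v - (D *ᵥ v) ⬝ᵥ v := by
      rw [hTA, hinner_eq, hA, Matrix.sub_mulVec, sub_dotProduct]
    have hDv : (D *ᵥ v) ⬝ᵥ v = ∑ i, S i i * (v i)^2 := by
      rw [hD]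
      simp [dotProduct, Matrix.mulVec_diagonal, Matrix.diag]
      exact Finset.sum_congr rfl fun i _ => by ring
    have hnormx : ‖x‖ ^ 2 = ∑ i, (v i) ^ 2 := by
      rw [PiLp.norm_sq_eq_of_L2]
      exact Finset.sum_congr rfl fun i _ => by
        rw [Real.norm_eq_abs, sq_abs]; rfl
    have hDnn : 0 ≤ (D *ᵥ v) ⬝ᵥ v := by
      rw [hDv]
      exact Finset.sum_nonneg fun i _ => mul_nonneg (hdiag_nonneg i) (sq_nonneg _)
    have hDle : (D *ᵥ v) ⬝ᵥ v ≤ ‖TS‖ * ‖x‖ ^ 2 := by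
      rw [hDv, hnormx, Finset.mul_sum]
      exact Finset.sum_le_sum fun i _ => by
        have := sq_nonneg (v i); nlinarith [hdiag_le i]
    have hSup : (S *ᵥ v) ⬝ᵥ v ≤ ‖TS‖ * ‖x‖ ^ 2 := by
      have h1 : ⟪TS x, x⟫ = (S *ᵥ v) ⬝ᵥ v := hinner_eq S x x
      calc (S *ᵥ v) ⬝ᵥ v = ⟪TS x, x⟫ := h1.symm
        _ ≤ ‖TS x‖ * ‖x‖ := real_inner_le_norm _ _
        _ ≤ ‖TS‖ * ‖x‖ * ‖x‖ := by gcongr; exact TS.le_opNorm _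
        _ = ‖TS‖ * ‖x‖ ^ 2 := by ring
    have hSnn : 0 ≤ (S *ᵥ v) ⬝ᵥ v := by
      have := hS.dotProduct_mulVec_nonneg v
      simpa [dotProduct_comm] using this
    rw [hAv, abs_le]
    constructor <;> nlinarith
  exact selfAdjoint_opNorm_le TA hsym hc hb
end
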